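/- Given good 2^{k*−1}-colorings C^a of G*_{S^a} and C^b of G*_{S^b} (for any partition S_{k*} = S^a_{k*} ∪ S^b_{k*}), the merged coloring C defined by C(v_s^i) = C^a(v_s^i) for i ≤ 2^{k*−1}/p_s, C(v_s^i) = C^b(v_s^{i − 2^{k*−1}/p_s}) + 2^{k*−1} for larger i (streams with p_s ≤ 2^{k*−1}), C(v_s^1) = C^a(v_s^1) for s ∈ S^a_{k*}, and C(v_s^1) = C^b(v_s^1) + 2^{k*−1} for s ∈ S^b_{k*}, is a good 2^{k*}-coloring of G*_S. -/

import Mathlib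

/-- A "good" partial coloring for the multiplicity interval graph `G*_S`:
streams `s` have intervals `[a s, b s - 1]` and periods `2 ^ k s`; with hyperperiod `2 ^ K`
each stream has `2 ^ (K - k s)` copies indexed by `i < 2 ^ (K - k s)`.  `Q` restricts to a
subset of the streams.  The coloring must be proper (copies with intersecting intervals get
distinct colors) and each copy `i` must receive a color in the window
`[i * 2 ^ k s + 1, (i + 1) * 2 ^ k s]`. -/
def GoodOn {S : Type} (a b k : S → ℕ) (K : ℕ) (Q : S → Prop) (C : S → ℕ → ℕ) : Prop :=
  (∀ s i s' i', Q s → Q s' → i < 2 ^ (K - k s) → i' < 2 ^ (K - k s') →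
      (s ≠ s' ∨ i ≠ i') →
      (Finset.Icc (a s) (b s - 1) ∩ Finset.Icc (a s') (b s' - 1)).Nonempty →
      C s i ≠ C s' i')
  ∧ ∀ s, Q s → ∀ i, i < 2 ^ (K - k s) →
      i * 2 ^ k s + 1 ≤ C s i ∧ C s i ≤ (i + 1) * 2 ^ k s

/-!
Each copy of a stream with period `2 ^ k s < 2 ^ kstar` falls into the first or the second half
of the hyperperiod `2 ^ kstar`; a stream with full period has a single copy, placed in the half
its part of the partition asks for (`P s = false` for `S^a`). Copies in the first half take their
color from `Ca`, those in the second half from `Cb` shifted by `2 ^ (kstar - 1)`, in both cases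
at the index `i % 2 ^ (kstar - 1 - k s)` of the corresponding copy for the halved hyperperiod.
Colors of `Ca` lie in `[1, 2 ^ (kstar - 1)]` and shifted colors of `Cb` above it, so copies colored
from different halves never clash; within one half the reindexing is injective on each stream,
so properness is inherited from `Ca` and `Cb`.
-/

namespace GoodOn

variable {S : Type} {a b k : S → ℕ} {K : ℕ} {Q : S → Prop} {C : S → ℕ → ℕ}

theorem le_two_pow (h : GoodOn a b k K Q C) {s : S} (hQ : Q s) (hks : k s ≤ K) {i : ℕ}
    (hi : i < 2 ^ (K - k s)) : C s i ≤ 2 ^ K :=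
  calc C s i ≤ (i + 1) * 2 ^ k s := (h.2 s hQ i hi).2
    _ ≤ 2 ^ (K - k s) * 2 ^ k s := Nat.mul_le_mul_right _ hi
    _ = 2 ^ K := by rw [← pow_add, Nat.sub_add_cancel hks]

theorem pos (h : GoodOn a b k K Q C) {s : S} (hQ : Q s) {i : ℕ} (hi : i < 2 ^ (K - k s)) :
    0 < C s i :=
  Nat.lt_of_lt_of_le (Nat.succ_pos _) (h.2 s hQ i hi).1

end GoodOn

theorem Nat.two_pow_sub_eq_two_mul {m n : ℕ} (h : n < m) :
    2 ^ (m - n) = 2 * 2 ^ (m - 1 - n) := by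
  rw [show m - n = m - 1 - n + 1 by omega, pow_succ, mul_comm]

theorem Nat.mod_eq_ite_of_lt_two_mul {i E : ℕ} (hi : i < 2 * E) :
    i % E = if i < E then i else i - E := by
  split_ifs with h
  · exact Nat.mod_eq_of_lt h
  · rw [Nat.mod_eq_sub_mod (not_lt.1 h), Nat.mod_eq_of_lt (by omega)]

theorem Nat.eq_zero_of_lt_two_pow_sub {m n i : ℕ} (h : m ≤ n) (hi : i < 2 ^ (m - n)) :
    i = 0 := by
  rwa [Nat.sub_eq_zero_of_le h, pow_zero, Nat.lt_one_iff] at hi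

section Merge

variable {S : Type} (kstar : ℕ) (k : S → ℕ) (P : S → Bool) (Ca Cb : S → ℕ → ℕ)

def IsFirstHalfCopy (s : S) (i : ℕ) : Prop :=
  if k s < kstar then i < 2 ^ (kstar - 1 - k s) else P s = false

instance (s : S) (i : ℕ) : Decidable (IsFirstHalfCopy kstar k P s i) := by
  unfold IsFirstHalfCopy; infer_instance

def mergeColoring (s : S) (i : ℕ) : ℕ :=
  if k s < kstar then
    (if i < 2 ^ (kstar - 1 - k s) then Ca s i
     else Cb s (i - 2 ^ (kstar - 1 - k s)) + 2 ^ (kstar - 1))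
  else if P s = false then Ca s 0 else Cb s 0 + 2 ^ (kstar - 1)

variable {kstar k P Ca Cb}

theorem mergeColoring_eq {s : S} {i : ℕ} (hi : i < 2 ^ (kstar - k s)) :
    mergeColoring kstar k P Ca Cb s i =
      if IsFirstHalfCopy kstar k P s i then Ca s (i % 2 ^ (kstar - 1 - k s))
      else Cb s (i % 2 ^ (kstar - 1 - k s)) + 2 ^ (kstar - 1) := by
  unfold mergeColoring IsFirstHalfCopy
  by_cases hks : k s < kstar
  · rw [Nat.mod_eq_ite_of_lt_two_mul (Nat.two_pow_sub_eq_two_mul hks ▸ hi)]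
    by_cases h : i < 2 ^ (kstar - 1 - k s) <;> simp [hks, h]
  · obtain rfl := Nat.eq_zero_of_lt_two_pow_sub (not_lt.1 hks) hi
    simp [hks]

theorem IsFirstHalfCopy.lt_or_eq_false {s : S} {i : ℕ} (h : IsFirstHalfCopy kstar k P s i) :
    k s < kstar ∨ P s = false := by
  unfold IsFirstHalfCopy at h
  split_ifs at h with hks
  exacts [Or.inl hks, Or.inr h]

theorem lt_or_eq_true_of_not_isFirstHalfCopy {s : S} {i : ℕ}
    (h : ¬IsFirstHalfCopy kstar k P s i) :
    k s < kstar ∨ P s = true := by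
  unfold IsFirstHalfCopy at h
  split_ifs at h with hks
  exacts [Or.inl hks, Or.inr (Bool.not_eq_false _ ▸ h)]

theorem eq_of_mod_eq_of_isFirstHalfCopy_iff {s : S} {i i' : ℕ} (hi : i < 2 ^ (kstar - k s))
    (hi' : i' < 2 ^ (kstar - k s))
    (hhalf : IsFirstHalfCopy kstar k P s i ↔ IsFirstHalfCopy kstar k P s i')
    (hmod : i % 2 ^ (kstar - 1 - k s) = i' % 2 ^ (kstar - 1 - k s)) : i = i' := by
  by_cases hks : k s < kstar
  · simp only [IsFirstHalfCopy, hks, if_true] at hhalf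
    rw [Nat.two_pow_sub_eq_two_mul hks] at hi hi'
    rw [Nat.mod_eq_ite_of_lt_two_mul hi, Nat.mod_eq_ite_of_lt_two_mul hi'] at hmod
    split_ifs at hmod <;> omega
  · rw [Nat.eq_zero_of_lt_two_pow_sub (not_lt.1 hks) hi,
      Nat.eq_zero_of_lt_two_pow_sub (not_lt.1 hks) hi']

variable {a b : S → ℕ}

theorem mergeColoring_ne
    (hCa : GoodOn a b (fun s => min (k s) (kstar - 1)) (kstar - 1)
        (fun s => k s < kstar ∨ P s = false) Ca)
    (hCb : GoodOn a b (fun s => min (k s) (kstar - 1)) (kstar - 1)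
        (fun s => k s < kstar ∨ P s = true) Cb)
    {s s' : S} {i i' : ℕ} (hi : i < 2 ^ (kstar - k s)) (hi' : i' < 2 ^ (kstar - k s'))
    (hne : s ≠ s' ∨ i ≠ i')
    (hmeet : (Finset.Icc (a s) (b s - 1) ∩ Finset.Icc (a s') (b s' - 1)).Nonempty) :
    mergeColoring kstar k P Ca Cb s i ≠ mergeColoring kstar k P Ca Cb s' i' := by
  have hloc {t : S} {j : ℕ} (_ : j < 2 ^ (kstar - k t)) :
      j % 2 ^ (kstar - 1 - k t) < 2 ^ (kstar - 1 - min (k t) (kstar - 1)) := by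
    rw [show kstar - 1 - min (k t) (kstar - 1) = kstar - 1 - k t by omega]
    exact Nat.mod_lt _ (by positivity)
  have hne_of_same_half
      (hhalf : IsFirstHalfCopy kstar k P s i ↔ IsFirstHalfCopy kstar k P s' i') :
      s ≠ s' ∨ i % 2 ^ (kstar - 1 - k s) ≠ i' % 2 ^ (kstar - 1 - k s') := by
    rcases eq_or_ne s s' with rfl | hs
    · exact Or.inr fun hmod =>
        hne.resolve_left (not_not.2 rfl) (eq_of_mod_eq_of_isFirstHalfCopy_iff hi hi' hhalf hmod)
    · exact Or.inl hs
  rw [mergeColoring_eq hi, mergeColoring_eq hi']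
  split_ifs with h h' h'
  · exact hCa.1 s _ s' _ h.lt_or_eq_false h'.lt_or_eq_false (hloc hi) (hloc hi')
      (hne_of_same_half (iff_of_true h h')) hmeet
  · have := hCa.le_two_pow h.lt_or_eq_false (min_le_right _ _) (hloc hi)
    have := hCb.pos (lt_or_eq_true_of_not_isFirstHalfCopy h') (hloc hi')
    omega
  · have := hCa.le_two_pow h'.lt_or_eq_false (min_le_right _ _) (hloc hi')
    have := hCb.pos (lt_or_eq_true_of_not_isFirstHalfCopy h) (hloc hi)
    omega
  · exact fun heq => hCb.1 s _ s' _ (lt_or_eq_true_of_not_isFirstHalfCopy h)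
      (lt_or_eq_true_of_not_isFirstHalfCopy h') (hloc hi) (hloc hi')
      (hne_of_same_half (iff_of_false h h')) hmeet (Nat.add_right_cancel heq)

theorem mergeColoring_mem_window (hk1 : 1 ≤ kstar)
    (hCa : GoodOn a b (fun s => min (k s) (kstar - 1)) (kstar - 1)
        (fun s => k s < kstar ∨ P s = false) Ca)
    (hCb : GoodOn a b (fun s => min (k s) (kstar - 1)) (kstar - 1)
        (fun s => k s < kstar ∨ P s = true) Cb)
    {s : S} {i : ℕ} (hi : i < 2 ^ (kstar - k s)) :
    i * 2 ^ k s + 1 ≤ mergeColoring kstar k P Ca Cb s i ∧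
      mergeColoring kstar k P Ca Cb s i ≤ (i + 1) * 2 ^ k s := by
  by_cases hks : k s < kstar
  · have hmin : min (k s) (kstar - 1) = k s := by omega
    have hcount : kstar - 1 - min (k s) (kstar - 1) = kstar - 1 - k s := by omega
    simp only [mergeColoring, hks, if_true]
    split_ifs with hfirst
    · simpa only [hmin] using hCa.2 s (Or.inl hks) i (hcount ▸ hfirst)
    · obtain ⟨j, rfl⟩ : ∃ j, i = j + 2 ^ (kstar - 1 - k s) :=
        ⟨_, (Nat.sub_add_cancel (not_lt.1 hfirst)).symm⟩
      have hj : j < 2 ^ (kstar - 1 - k s) := by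
        rw [Nat.two_pow_sub_eq_two_mul hks] at hi
        omega
      have hshift : 2 ^ (kstar - 1 - k s) * 2 ^ k s = 2 ^ (kstar - 1) := by
        rw [← pow_add, Nat.sub_add_cancel (by omega)]
      have := hCb.2 s (Or.inl hks) j (hcount ▸ hj)
      simp only [hmin, Nat.add_sub_cancel, add_mul, one_mul, hshift] at this ⊢
      omega
  · obtain rfl := Nat.eq_zero_of_lt_two_pow_sub (not_lt.1 hks) hi
    have hmin : min (k s) (kstar - 1) = kstar - 1 := by omega
    have hcopy : (0 : ℕ) < 2 ^ (kstar - 1 - min (k s) (kstar - 1)) := by positivity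
    have hdouble : 2 ^ (kstar - 1) + 2 ^ (kstar - 1) ≤ 2 ^ k s := by
      rw [← two_mul, ← pow_succ', Nat.sub_add_cancel hk1]
      exact Nat.pow_le_pow_right two_pos (not_lt.1 hks)
    simp only [mergeColoring, hks, if_false, zero_mul, zero_add, one_mul]
    split_ifs with hP
    · have := hCa.2 s (Or.inr hP) 0 hcopy
      simp only [hmin] at this
      omega
    · have := hCb.2 s (Or.inr (Bool.not_eq_false _ ▸ hP)) 0 hcopy
      simp only [hmin] at this
      omega

end Merge

theorem stmt15_general (S : Type) (kstar : ℕ) (hk1 : 1 ≤ kstar)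
    (a b k : S → ℕ) (P : S → Bool)
    (Ca Cb : S → ℕ → ℕ)
    (hCa : GoodOn a b (fun s => min (k s) (kstar - 1)) (kstar - 1)
        (fun s => k s < kstar ∨ P s = false) Ca)
    (hCb : GoodOn a b (fun s => min (k s) (kstar - 1)) (kstar - 1)
        (fun s => k s < kstar ∨ P s = true) Cb) :
    GoodOn a b k kstar (fun _ => True)
      (fun s i =>
        if k s < kstar then
          (if i < 2 ^ (kstar - 1 - k s) then Ca s i
           else Cb s (i - 2 ^ (kstar - 1 - k s)) + 2 ^ (kstar - 1))
        else if P s = false then Ca s 0 else Cb s 0 + 2 ^ (kstar - 1)) :=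
  ⟨fun _ _ _ _ _ _ hi hi' hne hmeet => mergeColoring_ne hCa hCb hi hi' hne hmeet,
    fun _ _ _ hi => mergeColoring_mem_window hk1 hCa hCb hi⟩

theorem stmt15 (S : Type) [Fintype S] (kstar : ℕ) (hk1 : 1 ≤ kstar)
    (a b k : S → ℕ) (hk : ∀ s, k s ≤ kstar) (P : S → Bool)
    (Ca Cb : S → ℕ → ℕ)
    (hCa : GoodOn a b (fun s => min (k s) (kstar - 1)) (kstar - 1)
        (fun s => k s < kstar ∨ P s = false) Ca)
    (hCb : GoodOn a b (fun s => min (k s) (kstar - 1)) (kstar - 1)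
        (fun s => k s < kstar ∨ P s = true) Cb) :
    GoodOn a b k kstar (fun _ => True)
      (fun s i =>
        if k s < kstar then
          (if i < 2 ^ (kstar - 1 - k s) then Ca s i
           else Cb s (i - 2 ^ (kstar - 1 - k s)) + 2 ^ (kstar - 1))
        else if P s = false then Ca s 0 else Cb s 0 + 2 ^ (kstar - 1)) :=
  stmt15_general S kstar hk1 a b k P Ca Cb hCa hCb
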